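/- Let Γ be a finite connected simplicial graph with no SIL, and let v, w be distinct non-adjacent vertices of Γ. Let C₀ be the connected component of Γ∖st(v) containing w, and let D₀ be the connected component of Γ∖st(w) containing v. Then every connected component of Γ∖st(v) other than C₀ is entirely contained in D₀, and every connected component of Γ∖st(w) other than D₀ is entirely contained in C₀. -/

import Mathlib

/-!
If a component `C ≠ C₀` of `Γ ∖ st(v)` had a vertex `u ∉ D₀`, then a path from `u` in
`Γ ∖ (lk(v) ∩ lk(w))` could never enter `st(v) ∪ st(w)`: its first vertex there would lie in
`lk(v) ∖ lk(w)` or `lk(w) ∖ lk(v)`, joining `u` to `v` off `st(w)` or to `w` off `st(v)`, i.e.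
putting `u` into `D₀` or `C₀`. So the component of `u` in `Γ ∖ (lk(v) ∩ lk(w))` avoids `v` and
`w`, which is a SIL.
-/

open Monoid

namespace ArXiv

universe u uG

variable {V : Type u}

/-- The star of a vertex: the vertex together with its neighbors. -/
def star (Γ : SimpleGraph V) (v : V) : Set V := insert v (Γ.neighborSet v)

/-- `C ⊆ V` is the vertex set of a connected component of the full subgraph of `Γ`
induced on `S`. -/
def IsCompOf (Γ : SimpleGraph V) (S : Set V) (C : Set V) : Prop :=
  ∃ c : (Γ.induce S).ConnectedComponent, C = Subtype.val '' c.supp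

/-- `Γ` has a separating intersection of links: there are distinct non-adjacent vertices
`v, w` such that some connected component of `Γ ∖ (lk(v) ∩ lk(w))` contains neither `v`
nor `w`. -/
def HasSIL (Γ : SimpleGraph V) : Prop :=
  ∃ v w : V, v ≠ w ∧ ¬ Γ.Adj v w ∧
    ∃ C : Set V, IsCompOf Γ ((Γ.neighborSet v ∩ Γ.neighborSet w)ᶜ) C ∧ v ∉ C ∧ w ∉ C

variable (Γ : SimpleGraph V) (G : V → Type uG) [∀ v, Group (G v)]

/-- The commutator relators defining the graph product. -/
def rels : Set (Monoid.CoprodI G) :=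
  {x | ∃ (v w : V) (_ : Γ.Adj v w) (g : G v) (h : G w),
    x = CoprodI.of g * CoprodI.of h * (CoprodI.of g)⁻¹ * (CoprodI.of h)⁻¹}

/-- The graph product of the vertex groups `G v` over the graph `Γ`: the quotient of the
free product by the normal closure of the commutators of adjacent vertex groups. -/
def GraphProduct : Type (max u uG) :=
  Monoid.CoprodI G ⧸ Subgroup.normalClosure (rels Γ G)

instance : Group (GraphProduct Γ G) :=
  inferInstanceAs (Group (Monoid.CoprodI G ⧸ Subgroup.normalClosure (rels Γ G)))

/-- The canonical map from a vertex group into the graph product. -/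
def of {v : V} : G v →* GraphProduct Γ G :=
  (QuotientGroup.mk' (Subgroup.normalClosure (rels Γ G))).comp CoprodI.of

theorem of_commute {v w : V} (h : Γ.Adj v w) (g : G v) (k : G w) :
    Commute (of Γ G g) (of Γ G k) := by
  rw [← commutatorElement_eq_one_iff_commute]
  have hmem : (CoprodI.of g * CoprodI.of k * (CoprodI.of g)⁻¹ * (CoprodI.of k)⁻¹ :
      Monoid.CoprodI G) ∈ Subgroup.normalClosure (rels Γ G) :=
    Subgroup.subset_normalClosure ⟨v, w, h, g, k, rfl⟩
  have h1 : (QuotientGroup.mk' (Subgroup.normalClosure (rels Γ G)))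
      (CoprodI.of g * CoprodI.of k * (CoprodI.of g)⁻¹ * (CoprodI.of k)⁻¹) = 1 :=
    (QuotientGroup.eq_one_iff _).mpr hmem
  simp only [map_mul, map_inv] at h1
  rw [commutatorElement_def]
  exact h1

/-- `π` is the partial conjugation `π_{v,C}`, for vertex groups with chosen generators
`gen`: it conjugates the generators in `C` by (the generator of) `v` and fixes all other
generators. -/
def IsPartialConj (gen : ∀ v, G v) (π : MulAut (GraphProduct Γ G)) (v : V) (C : Set V) :
    Prop :=
  (∀ u ∈ C, ∀ g : G u, π (of Γ G g) = of Γ G (gen v) * of Γ G g * (of Γ G (gen v))⁻¹) ∧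
  (∀ u ∉ C, ∀ g : G u, π (of Γ G g) = of Γ G g)

/-- `π` is the partial conjugation `π_{a,C}` by the element `a` of the vertex group `G v`:
it conjugates the vertex groups in `C` by `a` and fixes all other vertex groups. -/
def IsPartialConjBy {v : V} (a : G v) (π : MulAut (GraphProduct Γ G)) (C : Set V) : Prop :=
  (∀ u ∈ C, ∀ g : G u, π (of Γ G g) = of Γ G a * of Γ G g * (of Γ G a)⁻¹) ∧
  (∀ u ∉ C, ∀ g : G u, π (of Γ G g) = of Γ G g)

/-- The vertex set of the graph `Γ̃`: pairs `p_{v,C}` where `C` is a connected component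
of `Γ ∖ st(v)`. -/
def TV : Type u := {p : V × Set V // IsCompOf Γ ((star Γ p.1)ᶜ) p.2}

/-- The graph `Γ̃`: vertices `p_{v,C}` and `p_{w,D}` are joined by an edge unless
`v, w` are distinct non-adjacent vertices with `v ∈ D` and `w ∈ C`. -/
def tilde : SimpleGraph (TV Γ) where
  Adj p q := p ≠ q ∧
    ¬(p.1.1 ≠ q.1.1 ∧ ¬ Γ.Adj p.1.1 q.1.1 ∧ p.1.1 ∈ q.1.2 ∧ q.1.1 ∈ p.1.2)
  symm := ⟨by
    rintro p q ⟨h1, h2⟩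
    exact ⟨h1.symm, fun ⟨a, b, c, d⟩ => h2 ⟨a.symm, fun e => b e.symm, d, c⟩⟩⟩
  loopless := ⟨fun p h => h.1 rfl⟩

/-- The graph product `G_{Γ̃}`, where the vertex `p_{v,C}` is labeled by (a copy of) the
group `G v`. -/
abbrev TildeProduct : Type (max u uG) :=
  GraphProduct (tilde Γ) (fun p : TV Γ => G p.1.1)

/-- The element `p_v = ∏_C p_{v,C} ∈ G_{Γ̃}`, the product over all connected components
`C` of `Γ ∖ st(v)` (the factors pairwise commute). -/
noncomputable def pvert [Finite V] (gen : ∀ v, G v) (v : V) : TildeProduct Γ G :=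
  haveI : Fintype {C : Set V // IsCompOf Γ ((star Γ v)ᶜ) C} := Fintype.ofFinite _
  Finset.noncommProd (Finset.univ : Finset {C : Set V // IsCompOf Γ ((star Γ v)ᶜ) C})
    (fun c => of (tilde Γ) (fun p : TV Γ => G p.1.1) (v := ⟨(v, c.1), c.2⟩) (gen v))
    (by
      intro a _ b _ hab
      have hadj : (tilde Γ).Adj ⟨(v, a.1), a.2⟩ ⟨(v, b.1), b.2⟩ := by
        show _ ≠ _ ∧ _
        refine ⟨fun h => hab (Subtype.ext (congrArg (fun x : TV Γ => x.1.2) h)), ?_⟩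
        rintro ⟨hne, -⟩
        exact hne rfl
      exact of_commute (tilde Γ) (fun p : TV Γ => G p.1.1) hadj (gen v) (gen v))

/-- The set `Δ` of vertices adjacent to every other vertex of `Γ`. -/
def Delta (Γ : SimpleGraph V) : Set V := {v | ∀ u, u ≠ v → Γ.Adj v u}

/-- The subgroup of the graph product generated by the vertex groups `G v`, `v ∈ T`. -/
def vertexSubgroup (T : Set V) : Subgroup (GraphProduct Γ G) :=
  Subgroup.closure {x | ∃ v ∈ T, ∃ g : G v, x = of Γ G g}

/-- `w` is a reduced word for the element `g` of the graph product: a minimal length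
expression of `g` as a product of nontrivial elements of vertex groups. -/
def IsReducedWord (g : GraphProduct Γ G) (w : List (Σ v : V, G v)) : Prop :=
  (w.map fun l => of Γ G l.2).prod = g ∧ (∀ l ∈ w, l.2 ≠ 1) ∧
    ∀ w' : List (Σ v : V, G v), (w'.map fun l => of Γ G l.2).prod = g →
      w.length ≤ w'.length

section Components

variable {Γ : SimpleGraph V} {S C D : Set V} {x y : V}

theorem IsCompOf.subset (hC : IsCompOf Γ S C) : C ⊆ S := by
  intro _ hx
  obtain ⟨c, rfl⟩ := hC
  obtain ⟨x, -, rfl⟩ := hx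
  exact x.2

theorem IsCompOf.mem_of_adj (hC : IsCompOf Γ S C) (hx : x ∈ C) (hy : y ∈ S)
    (hxy : Γ.Adj x y) : y ∈ C := by
  obtain ⟨c, rfl⟩ := hC
  obtain ⟨x, hxc, rfl⟩ := hx
  refine ⟨⟨y, hy⟩, ?_, rfl⟩
  rw [SimpleGraph.ConnectedComponent.mem_supp_iff] at hxc ⊢
  exact (SimpleGraph.ConnectedComponent.connectedComponentMk_eq_of_adj
    (show (Γ.induce S).Adj ⟨y, hy⟩ x from hxy.symm)).trans hxc

theorem IsCompOf.eq_of_mem (hC : IsCompOf Γ S C) (hD : IsCompOf Γ S D) (hxC : x ∈ C)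
    (hxD : x ∈ D) : C = D := by
  obtain ⟨c, rfl⟩ := hC
  obtain ⟨d, rfl⟩ := hD
  obtain ⟨x, hxc, rfl⟩ := hxC
  obtain ⟨x', hxd, hx'⟩ := hxD
  obtain rfl : x' = x := Subtype.ext hx'
  rw [SimpleGraph.ConnectedComponent.mem_supp_iff] at hxc hxd
  rw [← hxc, ← hxd]

theorem exists_isCompOf_mem (hx : x ∈ S) : ∃ C, IsCompOf Γ S C ∧ x ∈ C :=
  ⟨_, ⟨(Γ.induce S).connectedComponentMk ⟨x, hx⟩, rfl⟩, ⟨x, hx⟩, rfl, rfl⟩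

theorem _root_.SimpleGraph.Reachable.of_adj_closed {W : Type*} {H : SimpleGraph W}
    {P : W → Prop} (hP : ∀ a b, H.Adj a b → P a → P b) {a b : W} (h : H.Reachable a b)
    (ha : P a) : P b := by
  replace h := (SimpleGraph.reachable_iff_reflTransGen a b).mp h
  induction h with
  | refl => exact ha
  | tail _ hbc ih => exact hP _ _ hbc ih

theorem IsCompOf.subset_of_adj_closed {T : Set V} (hC : IsCompOf Γ S C) (hx : x ∈ C)
    (hxT : x ∈ T) (hT : ∀ a ∈ T, ∀ b ∈ S, Γ.Adj a b → b ∈ T) : C ⊆ T := by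
  obtain ⟨c, rfl⟩ := hC
  obtain ⟨x, hxc, rfl⟩ := hx
  rintro _ ⟨y, hyc, rfl⟩
  rw [SimpleGraph.ConnectedComponent.mem_supp_iff] at hxc hyc
  exact SimpleGraph.Reachable.of_adj_closed (P := fun a : S => a.1 ∈ T)
    (fun a b hab ha => hT a ha b b.2 hab)
    (SimpleGraph.ConnectedComponent.exact (hxc.trans hyc.symm)) hxT

end Components

section Nesting

variable {Γ : SimpleGraph V} {v w : V} {C₀ D₀ : Set V}

/-- Entering `lk(v) ∖ lk(w)` from `x` would join `x` to `v` inside `Γ ∖ st(w)`. -/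
theorem not_mem_star_of_adj (hadj : ¬ Γ.Adj v w) (hD₀ : IsCompOf Γ (star Γ w)ᶜ D₀)
    (hvD₀ : v ∈ D₀) {x y : V} (hxv : x ∉ star Γ v) (hxw : x ∉ star Γ w) (hxD₀ : x ∉ D₀)
    (hy : y ∉ Γ.neighborSet v ∩ Γ.neighborSet w) (hxy : Γ.Adj x y) : y ∉ star Γ v := by
  rintro (rfl | hvy)
  · exact hxv (Or.inr hxy.symm)
  have hyw : y ∉ star Γ w := by
    rintro (rfl | hwy)
    · exact hadj hvy
    · exact hy ⟨hvy, hwy⟩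
  exact hxD₀ (hD₀.mem_of_adj (hD₀.mem_of_adj hvD₀ hyw hvy) hxw hxy.symm)

theorem subset_of_isCompOf_ne (hsil : ¬ HasSIL Γ) (hvw : v ≠ w) (hadj : ¬ Γ.Adj v w)
    (hC₀ : IsCompOf Γ (star Γ v)ᶜ C₀) (hwC₀ : w ∈ C₀)
    (hD₀ : IsCompOf Γ (star Γ w)ᶜ D₀) (hvD₀ : v ∈ D₀)
    {C : Set V} (hC : IsCompOf Γ (star Γ v)ᶜ C) (hne : C ≠ C₀) : C ⊆ D₀ := by
  intro u hu
  by_contra huD₀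
  have huC₀ : u ∉ C₀ := fun h => hne (hC.eq_of_mem hC₀ hu h)
  have huv : u ∉ star Γ v := hC.subset hu
  have huw : u ∉ star Γ w := by
    rintro (rfl | hwu)
    · exact huC₀ hwC₀
    · exact huC₀ (hC₀.mem_of_adj hwC₀ huv hwu)
  let T : Set V := {x | x ∉ star Γ v ∧ x ∉ star Γ w ∧ x ∉ C₀ ∧ x ∉ D₀}
  have hT : ∀ x ∈ T, ∀ y ∈ (Γ.neighborSet v ∩ Γ.neighborSet w)ᶜ, Γ.Adj x y → y ∈ T := by
    rintro x ⟨hxv, hxw, hxC₀, hxD₀⟩ y hy hxy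
    have hyv := not_mem_star_of_adj hadj hD₀ hvD₀ hxv hxw hxD₀ hy hxy
    have hyw := not_mem_star_of_adj (fun h => hadj h.symm) hC₀ hwC₀ hxw hxv hxC₀
      (by rwa [Set.inter_comm]) hxy
    exact ⟨hyv, hyw, fun h => hxC₀ (hC₀.mem_of_adj h hxv hxy.symm),
      fun h => hxD₀ (hD₀.mem_of_adj h hxw hxy.symm)⟩
  obtain ⟨K, hK, huK⟩ := exists_isCompOf_mem (Γ := Γ)
    (S := (Γ.neighborSet v ∩ Γ.neighborSet w)ᶜ) (fun h => huv (Or.inr h.1))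
  have hKT := hK.subset_of_adj_closed huK (T := T) ⟨huv, huw, huC₀, huD₀⟩ hT
  exact hsil ⟨v, w, hvw, hadj, K, hK, fun h => (hKT h).1 (Or.inl rfl),
    fun h => (hKT h).2.1 (Or.inl rfl)⟩

end Nesting

theorem components_nest_general {V : Type u} (Γ : SimpleGraph V)
    (hsil : ¬ HasSIL Γ)
    (v w : V) (hvw : v ≠ w) (hadj : ¬ Γ.Adj v w)
    (C₀ D₀ : Set V)
    (hC₀ : IsCompOf Γ ((star Γ v)ᶜ) C₀) (hwC₀ : w ∈ C₀)
    (hD₀ : IsCompOf Γ ((star Γ w)ᶜ) D₀) (hvD₀ : v ∈ D₀) :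
    (∀ C : Set V, IsCompOf Γ ((star Γ v)ᶜ) C → C ≠ C₀ → C ⊆ D₀) ∧
    (∀ D : Set V, IsCompOf Γ ((star Γ w)ᶜ) D → D ≠ D₀ → D ⊆ C₀) :=
  ⟨fun _ hC hne => subset_of_isCompOf_ne hsil hvw hadj hC₀ hwC₀ hD₀ hvD₀ hC hne,
    fun _ hD hne => subset_of_isCompOf_ne hsil hvw.symm (fun h => hadj h.symm) hD₀ hvD₀
      hC₀ hwC₀ hD hne⟩

/-- (Lemma: components nest) If `Γ` is a finite connected graph with no
SIL, `v, w` distinct non-adjacent vertices, `C₀` the component of `Γ ∖ st(v)` containing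
`w` and `D₀` the component of `Γ ∖ st(w)` containing `v`, then every component of
`Γ ∖ st(v)` other than `C₀` lies in `D₀`, and symmetrically. -/
theorem components_nest {V : Type u} [Finite V] (Γ : SimpleGraph V)
    (hconn : Γ.Connected) (hsil : ¬ HasSIL Γ)
    (v w : V) (hvw : v ≠ w) (hadj : ¬ Γ.Adj v w)
    (C₀ D₀ : Set V)
    (hC₀ : IsCompOf Γ ((star Γ v)ᶜ) C₀) (hwC₀ : w ∈ C₀)
    (hD₀ : IsCompOf Γ ((star Γ w)ᶜ) D₀) (hvD₀ : v ∈ D₀) :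
    (∀ C : Set V, IsCompOf Γ ((star Γ v)ᶜ) C → C ≠ C₀ → C ⊆ D₀) ∧
    (∀ D : Set V, IsCompOf Γ ((star Γ w)ᶜ) D → D ≠ D₀ → D ⊆ C₀) :=
  components_nest_general Γ hsil v w hvw hadj C₀ D₀ hC₀ hwC₀ hD₀ hvD₀

end ArXiv
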